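/- arXiv:1909.04727 — 3 statements merged into one kernel-verified Lean document; each statement's English description precedes it below -/
import Mathlib

section
/- Let ΓA, ΓB, M, a1, a2, b1, b2 be nonnegative real numbers satisfying ΓA + ΓB ≥ a1 + a2 + b1 + b2, ΓA < M + a1 + a2, and ΓB < M + b1 + b2. Then (1/2)·[(a1 + a2 + b1 + b2) + 2M − min(b1 + b2, ΓB + M) − min(a1 + a2, ΓA + M)] = M. In words: with the surface-state correspondence assignments S(AB) = a1+a2+b1+b2, S(Aa) = M, S(ABa) = min(b1+b2, ΓB+M), S(a) = min(a1+a2, ΓA+M), the quantity f^R := (1/2)[S(AB) + 2S(Aa) − S(ABa) − S(a)] equals the entanglement wedge cross-section area M. -/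
/-- Eq. (13): with the surface-state correspondence assignments, the quantity
f^R = (1/2)[S(AB) + 2S(Aa) − S(ABa) − S(a)] equals the entanglement wedge
cross-section area M. -/
theorem eq13 (ΓA ΓB M a1 a2 b1 b2 : ℝ)
    (hΓA : 0 ≤ ΓA) (hΓB : 0 ≤ ΓB) (hM : 0 ≤ M)
    (ha1 : 0 ≤ a1) (ha2 : 0 ≤ a2) (hb1 : 0 ≤ b1) (hb2 : 0 ≤ b2)
    (hI : ΓA + ΓB ≥ a1 + a2 + b1 + b2)
    (hminA : ΓA < M + a1 + a2) (hminB : ΓB < M + b1 + b2) :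
    (1/2) * ((a1 + a2 + b1 + b2) + 2 * M
      - min (b1 + b2) (ΓB + M) - min (a1 + a2) (ΓA + M)) = M := by
  rw [min_eq_left (by linarith), min_eq_left (by linarith)]
  ring
end

section
/- Let ι be a nonempty index set and let SA, SB, Sa, SAB, SAa, SBa, SABa : ι → ℝ be functions such that for every i ∈ ι the tripartite information I₃(i) := SA(i) + SB(i) + Sa(i) − SAB(i) − SAa(i) − SBa(i) + SABa(i) is ≤ 0 (monogamy of mutual information). Define f^Q(i) := (1/2)[SA(i) + SB(i) + SAa(i) − SBa(i)] and f^R(i) := (1/2)[SAB(i) + 2·SAa(i) − SABa(i) − Sa(i)]. If the range of f^Q is bounded below, then the infimum of f^Q over ι is less than or equal to the infimum of f^R over ι. -/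
/-- Eq. (12): under monogamy of mutual information (I₃ ≤ 0 for every
purification/partition), E_Q(A:B) ≤ E_R(A:B). -/
theorem EQ_le_ER {ι : Type*} [Nonempty ι]
    (SA SB Sa SAB SAa SBa SABa : ι → ℝ)
    (hMMI : ∀ i, SA i + SB i + Sa i - SAB i - SAa i - SBa i + SABa i ≤ 0)
    (hbdd : BddBelow (Set.range fun i => (1/2) * (SA i + SB i + SAa i - SBa i))) :
    (⨅ i, (1/2) * (SA i + SB i + SAa i - SBa i))
      ≤ ⨅ i, (1/2) * (SAB i + 2 * SAa i - SABa i - Sa i) := by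
  exact ciInf_mono hbdd fun i => by nlinarith [hMMI i]
end

section
/- Let ΓA, ΓB, M, a1, a2, b1, b2 be real numbers with ΔA = ΔB (where ΔA := ΓA + M − a1 − a2 and ΔB := ΓB + M − b1 − b2), M ≤ ΓA + a1 + a2, and M ≤ ΓB + b1 + b2 (minimality of the cross-section M). Then (1/2)·ΔA ≤ min(ΓA, ΓB). In particular E_Q(A:B) := (1/2)ΔA ≤ min(S(A), S(B)) where S(A) = ΓA, S(B) = ΓB. -/
/-- Geometric verification of E_Q(A:B) ≤ min(S(A), S(B)): at the optimal
partition (ΔA = ΔB), with M minimal, (1/2)ΔA ≤ min(ΓA, ΓB). -/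
theorem EQ_le_min (ΓA ΓB M a1 a2 b1 b2 : ℝ)
    (hopt : ΓA + M - a1 - a2 = ΓB + M - b1 - b2)
    (hMA : M ≤ ΓA + a1 + a2) (hMB : M ≤ ΓB + b1 + b2) :
    (1/2) * (ΓA + M - a1 - a2) ≤ min ΓA ΓB := by
  rw [le_min_iff]
  constructor <;> nlinarith
end
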